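/- Let R be a commutative ring, L a finite locally free R-module, and A any symmetric bilinear form on Hom_R(L,R). Then the symmetric bilinear form on the R[t]-module L[t] ⊕ Hom_R(L,R)[t] given by the block matrix [[0, id],[id, tA]] is non-degenerate, its specialization at t = 1 is [[0, id],[id, A]], and its specialization at t = 0 is the hyperbolic form [[0, id],[id, 0]] on L ⊕ Hom_R(L,R). -/

import Mathlib

/-! The form `[[0, 1], [1, tA]]` is the hyperbolic form `H` precomposed with `1 + tσ`, where
`σ (l, f) = (A f, 0)` (reading `A f ∈ L^∨∨` as an element of `L`). Since `σ² = 0`, `1 + tσ` is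
invertible. `H` identifies `L ⊕ L^∨` with its dual because `L` is reflexive, and it stays perfect
after base change to `R[t]` because `L ⊕ L^∨` is finite projective, so that
`R[t] ⊗ (L ⊕ L^∨)^∨ ≃ (R[t] ⊗ (L ⊕ L^∨))^∨`. -/

open TensorProduct Polynomial

/-- The bilinear form on `L × L^∨` with block matrix `[[0, id], [id, 0]]`
(the hyperbolic form). -/
noncomputable def hypForm (R L : Type*) [CommRing R] [AddCommGroup L] [Module R L] :
    (L × Module.Dual R L) →ₗ[R] (L × Module.Dual R L) →ₗ[R] R :=
  LinearMap.mk₂ R (fun p q => p.2 q.1 + q.2 p.1)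
    (by intros; simp only [Prod.fst_add, Prod.snd_add, LinearMap.add_apply, map_add]; ring)
    (by intros; simp only [Prod.smul_fst, Prod.smul_snd, LinearMap.smul_apply, map_smul,
          smul_eq_mul]; ring)
    (by intros; simp only [Prod.fst_add, Prod.snd_add, LinearMap.add_apply, map_add]; ring)
    (by intros; simp only [Prod.smul_fst, Prod.smul_snd, LinearMap.smul_apply, map_smul,
          smul_eq_mul]; ring)

/-- The bilinear form on `L × L^∨` with block matrix `[[0, 0], [0, A]]` for a bilinear
form `A` on `L^∨`. -/
noncomputable def dualBlockForm (R L : Type*) [CommRing R] [AddCommGroup L] [Module R L]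
    (A : Module.Dual R L →ₗ[R] Module.Dual R L →ₗ[R] R) :
    (L × Module.Dual R L) →ₗ[R] (L × Module.Dual R L) →ₗ[R] R :=
  LinearMap.mk₂ R (fun p q => A p.2 q.2)
    (by intros; simp only [Prod.snd_add, map_add, LinearMap.add_apply])
    (by intros; simp only [Prod.smul_snd, map_smul, LinearMap.smul_apply])
    (by intros; simp only [Prod.snd_add, map_add, LinearMap.add_apply])
    (by intros; simp only [Prod.smul_snd, map_smul, LinearMap.smul_apply])

namespace LinearMap.BilinForm

theorem baseChange_compLeft {R M : Type*} [CommSemiring R] [AddCommMonoid M] [Module R M]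
    (S : Type*) [CommSemiring S] [Algebra R S] (B : LinearMap.BilinForm R M)
    (f : Module.End R M) :
    (B.compLeft f).baseChange S = (B.baseChange S).compLeft (f.baseChange S) := by
  ext
  simp

theorem bijective_baseChange {R M : Type*} [CommSemiring R] [AddCommMonoid M] [Module R M]
    [Module.Finite R M] [Module.Projective R M] (S : Type*) [CommSemiring S] [Algebra R S]
    (B : LinearMap.BilinForm R M) (hB : Function.Bijective B) :
    Function.Bijective (B.baseChange S) := by
  let dualBaseChange : S ⊗[R] Module.Dual R M ≃ₗ[R] Module.Dual S (S ⊗[R] M) :=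
    TensorProduct.comm R S _ ≪≫ₗ dualTensorHomEquiv R M S ≪≫ₗ
      (LinearMap.liftBaseChangeEquiv S).restrictScalars R
  have factor : ⇑(B.baseChange S) =
      dualBaseChange ∘ (LinearEquiv.ofBijective B hB).baseChange R S M (Module.Dual R M) := by
    funext m
    induction m using TensorProduct.induction_on with
    | zero => simp
    | add m m' h h' => simp [h, h']
    | tmul s x =>
      ext y
      simp [dualBaseChange, dualTensorHomEquiv, mul_comm]
  rw [factor]
  exact dualBaseChange.bijective.comp (LinearEquiv.bijective _)

theorem bijective_add_smul_compLeft {S N : Type*} [CommRing S] [AddCommGroup N] [Module S N]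
    (B : LinearMap.BilinForm S N) (hB : Function.Bijective B) {σ : Module.End S N}
    (hσ : IsNilpotent σ) (c : S) : Function.Bijective (B + c • B.compLeft σ) := by
  have : B + c • B.compLeft σ = B.compLeft (1 + c • σ) := by
    ext
    simp
  rw [this]
  exact hB.comp ((Module.End.isUnit_iff _).mp (hσ.smul c).isUnit_one_add)

end LinearMap.BilinForm

section Hyperbolic

variable {R L : Type*} [CommRing R] [AddCommGroup L] [Module R L] [Module.IsReflexive R L]

theorem hypForm_bijective : Function.Bijective (hypForm R L) := by
  let e := LinearEquiv.prodComm R L (Module.Dual R L) ≪≫ₗ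
    (LinearEquiv.refl R _).prodCongr (Module.evalEquiv R L) ≪≫ₗ
    Module.dualProdDualEquivDual R L (Module.Dual R L)
  have : hypForm R L = e.toLinearMap :=
    LinearMap.ext fun p => LinearMap.ext fun q => by simp [e, hypForm]
  exact this ▸ e.bijective

variable (A : Module.Dual R L →ₗ[R] Module.Dual R L →ₗ[R] R)

noncomputable def dualBlockEnd : Module.End R (L × Module.Dual R L) :=
  LinearMap.inl R L (Module.Dual R L) ∘ₗ (Module.evalEquiv R L).symm.toLinearMap ∘ₗ A ∘ₗ
    LinearMap.snd R L (Module.Dual R L)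

theorem hypForm_compLeft_dualBlockEnd :
    LinearMap.BilinForm.compLeft (hypForm R L) (dualBlockEnd A) = dualBlockForm R L A :=
  LinearMap.BilinForm.ext fun p q => by
    simp [dualBlockEnd, hypForm, dualBlockForm, Module.apply_evalEquiv_symm_apply]

theorem dualBlockEnd_mul_self : dualBlockEnd A * dualBlockEnd A = 0 :=
  LinearMap.ext fun p => by simp [dualBlockEnd]

end Hyperbolic

theorem hyperbolic_homotopy_general
    (R L : Type*) [CommRing R] [AddCommGroup L] [Module R L]
    [Module.Finite R L] [Module.Projective R L]
    (A : Module.Dual R L →ₗ[R] Module.Dual R L →ₗ[R] R)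
    (𝔅 : LinearMap.BilinForm (Polynomial R) (Polynomial R ⊗[R] (L × Module.Dual R L)))
    (h𝔅 : 𝔅 = LinearMap.BilinForm.baseChange (Polynomial R) (hypForm R L) +
      (X : Polynomial R) • LinearMap.BilinForm.baseChange (Polynomial R) (dualBlockForm R L A)) :
    Function.Bijective (fun m : Polynomial R ⊗[R] (L × Module.Dual R L) => 𝔅 m) ∧
    (∀ v w : L × Module.Dual R L,
      Polynomial.eval (1 : R) (𝔅 ((1 : Polynomial R) ⊗ₜ[R] v) ((1 : Polynomial R) ⊗ₜ[R] w)) =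
        hypForm R L v w + dualBlockForm R L A v w) ∧
    (∀ v w : L × Module.Dual R L,
      Polynomial.eval (0 : R) (𝔅 ((1 : Polynomial R) ⊗ₜ[R] v) ((1 : Polynomial R) ⊗ₜ[R] w)) =
        hypForm R L v w) := by
  subst h𝔅
  have hσ : IsNilpotent ((dualBlockEnd A).baseChange R[X]) :=
    ⟨2, by rw [pow_two, ← LinearMap.baseChange_mul, dualBlockEnd_mul_self,
      LinearMap.baseChange_zero]⟩
  refine ⟨?_, fun v w => by simp, fun v w => by simp⟩
  rw [← hypForm_compLeft_dualBlockEnd, LinearMap.BilinForm.baseChange_compLeft]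
  exact LinearMap.BilinForm.bijective_add_smul_compLeft _
    (LinearMap.BilinForm.bijective_baseChange _ _ hypForm_bijective) hσ X

/-- Let `L` be a finite locally free `R`-module and `A` a symmetric
bilinear form on `L^∨`.  The symmetric bilinear form on the `R[t]`-module
`L[t] ⊕ L^∨[t]` given by the block matrix `[[0, id], [id, t·A]]` is non-degenerate, its
specialization at `t = 1` is `[[0, id], [id, A]]`, and its specialization at `t = 0` is
the hyperbolic form `[[0, id], [id, 0]]` on `L ⊕ L^∨`. -/
theorem hyperbolic_homotopy
    (R L : Type*) [CommRing R] [AddCommGroup L] [Module R L]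
    [Module.Finite R L] [Module.Projective R L]
    (A : Module.Dual R L →ₗ[R] Module.Dual R L →ₗ[R] R)
    (hsymm : ∀ f g : Module.Dual R L, A f g = A g f)
    (𝔅 : LinearMap.BilinForm (Polynomial R) (Polynomial R ⊗[R] (L × Module.Dual R L)))
    (h𝔅 : 𝔅 = LinearMap.BilinForm.baseChange (Polynomial R) (hypForm R L) +
      (X : Polynomial R) • LinearMap.BilinForm.baseChange (Polynomial R) (dualBlockForm R L A)) :
    Function.Bijective (fun m : Polynomial R ⊗[R] (L × Module.Dual R L) => 𝔅 m) ∧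
    (∀ v w : L × Module.Dual R L,
      Polynomial.eval (1 : R) (𝔅 ((1 : Polynomial R) ⊗ₜ[R] v) ((1 : Polynomial R) ⊗ₜ[R] w)) =
        hypForm R L v w + dualBlockForm R L A v w) ∧
    (∀ v w : L × Module.Dual R L,
      Polynomial.eval (0 : R) (𝔅 ((1 : Polynomial R) ⊗ₜ[R] v) ((1 : Polynomial R) ⊗ₜ[R] w)) =
        hypForm R L v w) :=
  hyperbolic_homotopy_general R L A 𝔅 h𝔅
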